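/- Let Z and Zⁱ (i = 1, 2, …) be complete metric spaces with Z nonempty, φⁱ : Z → Zⁱ isometric embeddings, and let d be the pseudodistance on ⊔_{i=1}^∞ Zⁱ equal to d_{Zⁱ} on each piece and given by d(z, z') = inf_{z̄ ∈ Z} (d_{Zⁱ}(z, φⁱ(z̄)) + d_{Zʲ}(φʲ(z̄), z')) for z ∈ Zⁱ, z' ∈ Zʲ, i ≠ j. Then the quotient metric space (⊔_{i=1}^∞ Zⁱ)/Z := (⊔_{i=1}^∞ Zⁱ)/∼, where z ∼ z' iff d(z, z') = 0, is a complete metric space. -/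

import Mathlib

/-!
The glued pseudodistance makes `Σ i, W i` a pseudometric space whose separation quotient is the
required metric space, so it suffices that this pseudometric space is complete. A Cauchy sequence
either visits some fibre `W k` infinitely often, or eventually leaves every fibre; in the second
case each late term is close to a late term in another fibre, hence close to the glued copy of `Z`,
which meets every fibre. Either way the sequence eventually comes arbitrarily close to one fibre
`W k`, which is complete, and a Cauchy sequence approaching a complete set converges.
-/

/-- Glued pseudodistance on the countable disjoint union `Σ i, W i` of metric spaces,
obtained from isometric embeddings `φ i : Z → W i` of a common metric space `Z`. -/
noncomputable def glueDistSigma {Z : Type*} [MetricSpace Z] {W : ℕ → Type*}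
    [∀ i, MetricSpace (W i)] (φ : ∀ i, Z → W i) : (Σ i, W i) → (Σ i, W i) → ℝ
  | ⟨i, z⟩, ⟨j, z'⟩ =>
    if h : i = j then dist (h ▸ z) z'
    else ⨅ x : Z, (dist z (φ i x) + dist (φ j x) z')

universe u v

open Filter Metric Topology

section CauchySeq

variable {α : Type*} [PseudoMetricSpace α]

theorem CauchySeq.congr_dist {u v : ℕ → α} (hu : CauchySeq u)
    (h : Tendsto (fun n => dist (u n) (v n)) atTop (𝓝 0)) : CauchySeq v := by
  rw [cauchySeq_iff_tendsto_dist_atTop_0, ← prod_atTop_atTop_eq] at hu ⊢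
  have hsum : Tendsto (fun p : ℕ × ℕ => dist (v p.1) (u p.1) + dist (u p.1) (u p.2) +
      dist (u p.2) (v p.2)) (atTop ×ˢ atTop) (𝓝 0) := by
    simpa [dist_comm (v _)] using ((h.comp tendsto_fst).add hu).add (h.comp tendsto_snd)
  exact squeeze_zero (fun _ => dist_nonneg) (fun p => dist_triangle4 _ _ _ _) hsum

theorem CauchySeq.exists_tendsto_of_eventually_near {s : Set α} (hs : IsComplete s) {u : ℕ → α}
    (hu : CauchySeq u) (h : ∀ ε > 0, ∀ᶠ n in atTop, ∃ y ∈ s, dist (u n) y < ε) :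
    ∃ a, Tendsto u atTop (𝓝 a) := by
  obtain ⟨-, y, hy, -⟩ := (h 1 one_pos).exists
  have hinfDist : Tendsto (fun n => infDist (u n) s) atTop (𝓝 0) :=
    tendsto_order.2 ⟨fun _ hε => .of_forall fun _ => hε.trans_le infDist_nonneg,
      fun ε hε => (h ε hε).mono fun _ ⟨_, hz, hd⟩ => (infDist_le_dist_of_mem hz).trans_lt hd⟩
  have happrox (n : ℕ) : ∃ z ∈ s, dist (u n) z < infDist (u n) s + 1 / (n + 1) :=
    (infDist_lt_iff ⟨y, hy⟩).1 (lt_add_of_pos_right _ Nat.one_div_pos_of_nat)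
  choose v hvs hv using happrox
  have hdist : Tendsto (fun n => dist (u n) (v n)) atTop (𝓝 0) :=
    squeeze_zero (fun _ => dist_nonneg) (fun n => (hv n).le)
      (by simpa using hinfDist.add tendsto_one_div_add_atTop_nhds_zero_nat)
  obtain ⟨a, -, ha⟩ := cauchySeq_tendsto_of_isComplete hs hvs (hu.congr_dist hdist)
  exact ⟨a, ha.congr_dist (by simpa only [dist_comm] using hdist)⟩

end CauchySeq

section glueDistSigma

variable {Z : Type*} [MetricSpace Z] {W : ℕ → Type*} [∀ i, MetricSpace (W i)]
  (φ : ∀ i, Z → W i)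

theorem glueDistSigma_mk_self (i : ℕ) (z z' : W i) :
    glueDistSigma φ ⟨i, z⟩ ⟨i, z'⟩ = dist z z' := by
  simp [glueDistSigma]

theorem glueDistSigma_mk_of_ne {i j : ℕ} (h : i ≠ j) (z : W i) (z' : W j) :
    glueDistSigma φ ⟨i, z⟩ ⟨j, z'⟩ = ⨅ x : Z, (dist z (φ i x) + dist (φ j x) z') := by
  simp [glueDistSigma, h]

theorem glueDistSigma_mk_le_add {i j : ℕ} (z : W i) (z' : W j) (x : Z) :
    glueDistSigma φ ⟨i, z⟩ ⟨j, z'⟩ ≤ dist z (φ i x) + dist (φ j x) z' := by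
  rcases eq_or_ne i j with rfl | h
  · rw [glueDistSigma_mk_self]
    exact dist_triangle _ _ _
  · rw [glueDistSigma_mk_of_ne φ h]
    exact ciInf_le ⟨0, by rintro _ ⟨x, rfl⟩; positivity⟩ x

theorem glueDistSigma_self (a : Σ i, W i) : glueDistSigma φ a a = 0 := by
  rw [glueDistSigma_mk_self, dist_self]

theorem glueDistSigma_comm (a b : Σ i, W i) : glueDistSigma φ a b = glueDistSigma φ b a := by
  obtain ⟨i, z⟩ := a
  obtain ⟨j, z'⟩ := b
  rcases eq_or_ne i j with rfl | h
  · rw [glueDistSigma_mk_self, glueDistSigma_mk_self, dist_comm]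
  · rw [glueDistSigma_mk_of_ne φ h, glueDistSigma_mk_of_ne φ h.symm]
    simp only [dist_comm, add_comm]

variable [Nonempty Z]

theorem glueDistSigma_mk_le_dist_add {i : ℕ} (z w : W i) (c : Σ i, W i) :
    glueDistSigma φ ⟨i, z⟩ c ≤ dist z w + glueDistSigma φ ⟨i, w⟩ c := by
  obtain ⟨k, u⟩ := c
  rcases eq_or_ne i k with rfl | h
  · simp only [glueDistSigma_mk_self]
    exact dist_triangle _ _ _
  · rw [glueDistSigma_mk_of_ne φ h w, add_ciInf ⟨0, by rintro _ ⟨x, rfl⟩; positivity⟩]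
    refine le_ciInf fun x => (glueDistSigma_mk_le_add φ z u x).trans ?_
    rw [← add_assoc]
    gcongr
    exact dist_triangle _ _ _

variable {φ} (hφ : ∀ i, Isometry (φ i))
include hφ

theorem glueDistSigma_triangle_of_fst_ne {i j k : ℕ} (hij : i ≠ j) (hjk : j ≠ k) (z : W i)
    (w : W j) (u : W k) :
    glueDistSigma φ ⟨i, z⟩ ⟨k, u⟩ ≤
      glueDistSigma φ ⟨i, z⟩ ⟨j, w⟩ + glueDistSigma φ ⟨j, w⟩ ⟨k, u⟩ := by
  rw [glueDistSigma_mk_of_ne φ hij, glueDistSigma_mk_of_ne φ hjk]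
  refine le_ciInf_add_ciInf fun x y => (glueDistSigma_mk_le_add φ z u y).trans ?_
  calc dist z (φ i y) + dist (φ k y) u
      ≤ dist z (φ i x) + dist (φ i x) (φ i y) + dist (φ k y) u := by
        gcongr; exact dist_triangle _ _ _
    _ = dist z (φ i x) + dist (φ j x) (φ j y) + dist (φ k y) u := by
        rw [(hφ i).dist_eq, (hφ j).dist_eq]
    _ ≤ dist z (φ i x) + dist (φ j x) w + (dist w (φ j y) + dist (φ k y) u) := by
      linarith [dist_triangle (φ j x) w (φ j y)]

theorem glueDistSigma_triangle (a b c : Σ i, W i) :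
    glueDistSigma φ a c ≤ glueDistSigma φ a b + glueDistSigma φ b c := by
  obtain ⟨i, z⟩ := a
  obtain ⟨j, w⟩ := b
  obtain ⟨k, u⟩ := c
  rcases eq_or_ne i j with rfl | hij
  · rw [glueDistSigma_mk_self]
    exact glueDistSigma_mk_le_dist_add φ z w _
  rcases eq_or_ne j k with rfl | hjk
  · rw [glueDistSigma_mk_self, glueDistSigma_comm φ _ ⟨j, u⟩, glueDistSigma_comm φ _ ⟨j, w⟩,
      dist_comm, add_comm]
    exact glueDistSigma_mk_le_dist_add φ u w _
  exact glueDistSigma_triangle_of_fst_ne hφ hij hjk z w u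

end glueDistSigma

section GluedSigma

variable {Z : Type*} [MetricSpace Z] {W : ℕ → Type*} [∀ i, MetricSpace (W i)]
  {φ : ∀ i, Z → W i}

/-- Carries the glued pseudometric in place of the disjoint union topology of `Σ i, W i`; it takes
`hφ` because the triangle inequality of the glued distance needs it. -/
def GluedSigma (_hφ : ∀ i, Isometry (φ i)) : Type _ := Σ i, W i

variable (hφ : ∀ i, Isometry (φ i))

def GluedSigma.mk (i : ℕ) (z : W i) : GluedSigma hφ := ⟨i, z⟩

variable [Nonempty Z]

noncomputable instance : PseudoMetricSpace (GluedSigma hφ) where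
  dist := glueDistSigma φ
  dist_self := glueDistSigma_self φ
  dist_comm := glueDistSigma_comm φ
  dist_triangle := glueDistSigma_triangle hφ

namespace GluedSigma

theorem isometry_mk (k : ℕ) : Isometry (mk hφ k) :=
  Isometry.of_dist_eq (glueDistSigma_mk_self φ k)

theorem isComplete_fiber [∀ i, CompleteSpace (W i)] (k : ℕ) :
    IsComplete {a : GluedSigma hφ | a.1 = k} := by
  have h := (isometry_mk hφ k).isUniformInducing.isComplete_range
  rwa [show Set.range (mk hφ k) = {a | a.1 = k} from Set.range_sigmaMk k] at h

variable {hφ}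

theorem exists_mem_fiber_dist_lt_of_fst_ne {a b : GluedSigma hφ} (hab : a.1 ≠ b.1) (k : ℕ)
    {ε : ℝ} (h : dist a b < ε) : ∃ y ∈ {a : GluedSigma hφ | a.1 = k}, dist a y < ε := by
  obtain ⟨i, z⟩ := a
  obtain ⟨j, w⟩ := b
  change glueDistSigma φ ⟨i, z⟩ ⟨j, w⟩ < ε at h
  rw [glueDistSigma_mk_of_ne φ hab] at h
  obtain ⟨x, hx⟩ := exists_lt_of_ciInf_lt h
  refine ⟨⟨k, φ k x⟩, rfl, (glueDistSigma_mk_le_add φ z (φ k x) x).trans_lt ?_⟩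
  rw [dist_self, add_zero]
  exact (le_add_of_nonneg_right dist_nonneg).trans_lt hx

theorem exists_fiber_eventually_near {u : ℕ → GluedSigma hφ} (hu : CauchySeq u) :
    ∃ k, ∀ ε > 0, ∀ᶠ n in atTop, ∃ y ∈ {a : GluedSigma hφ | a.1 = k}, dist (u n) y < ε := by
  have hk : ∃ k, ∀ n, ∃ᶠ m in atTop, (u m).1 = k ∨ (u n).1 ≠ (u m).1 := by
    by_cases h : ∃ k, ∃ᶠ m in atTop, (u m).1 = k
    · obtain ⟨k, hk⟩ := h
      exact ⟨k, fun _ => hk.mono fun _ => Or.inl⟩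
    · push Not at h
      exact ⟨0, fun n => (h (u n).1).frequently.mono fun _ hm => Or.inr hm.symm⟩
  obtain ⟨k, hk⟩ := hk
  refine ⟨k, fun ε hε => ?_⟩
  obtain ⟨N, hN⟩ := Metric.cauchySeq_iff.1 hu ε hε
  filter_upwards [eventually_ge_atTop N] with n hn
  obtain ⟨m, hm | hm, hmN⟩ := ((hk n).and_eventually (eventually_ge_atTop N)).exists
  · exact ⟨u m, hm, hN n hn m hmN⟩
  · exact exists_mem_fiber_dist_lt_of_fst_ne hm k (hN n hn m hmN)

instance [∀ i, CompleteSpace (W i)] : CompleteSpace (GluedSigma hφ) :=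
  Metric.complete_of_cauchySeq_tendsto fun _ hu =>
    let ⟨k, hk⟩ := exists_fiber_eventually_near hu
    hu.exists_tendsto_of_eventually_near (isComplete_fiber hφ k) hk

end GluedSigma

end GluedSigma

theorem glueSigma_quotient_complete_general {Z : Type u} [MetricSpace Z]
    [Nonempty Z] {W : ℕ → Type v} [∀ i, MetricSpace (W i)]
    [∀ i, CompleteSpace (W i)] (φ : ∀ i, Z → W i)
    (hφ : ∀ i, ∀ x y : Z, dist (φ i x) (φ i y) = dist x y) :
    ∃ (Q : Type v) (_ : MetricSpace Q) (π : (Σ i, W i) → Q),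
      Function.Surjective π ∧
      (∀ a b : Σ i, W i, dist (π a) (π b) = glueDistSigma φ a b) ∧
      (∀ a b : Σ i, W i, π a = π b ↔ glueDistSigma φ a b = 0) ∧
      CompleteSpace Q := by
  have hiso : ∀ i, Isometry (φ i) := fun i => Isometry.of_dist_eq (hφ i)
  exact ⟨SeparationQuotient (GluedSigma hiso), inferInstance,
    fun a => SeparationQuotient.mk (GluedSigma.mk hiso a.1 a.2),
    SeparationQuotient.surjective_mk (X := GluedSigma hiso),
    fun a b => SeparationQuotient.dist_mk _ _,
    fun a b => SeparationQuotient.mk_eq_mk.trans Metric.inseparable_iff, inferInstance⟩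

/-- The quotient metric space `(⊔ᵢ Zⁱ)/Z` of the glued
pseudodistance (the quotient of `Σ i, W i` by the relation `d(z, z') = 0`, with
the distance induced by the glued pseudodistance) is a complete metric space. -/
theorem glueSigma_quotient_complete {Z : Type u} [MetricSpace Z]
    [CompleteSpace Z] [Nonempty Z] {W : ℕ → Type v} [∀ i, MetricSpace (W i)]
    [∀ i, CompleteSpace (W i)] (φ : ∀ i, Z → W i)
    (hφ : ∀ i, ∀ x y : Z, dist (φ i x) (φ i y) = dist x y) :
    ∃ (Q : Type v) (_ : MetricSpace Q) (π : (Σ i, W i) → Q),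
      Function.Surjective π ∧
      (∀ a b : Σ i, W i, dist (π a) (π b) = glueDistSigma φ a b) ∧
      (∀ a b : Σ i, W i, π a = π b ↔ glueDistSigma φ a b = 0) ∧
      CompleteSpace Q :=
  glueSigma_quotient_complete_general φ hφ
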